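/- For n ≥ 2, the cardinality of A_n equals 2^(f_{2n-3} - 1) and the cardinality of B_n equals 2^(f_{2n-4} + 1). -/
import Mathlib


/-- The two-letter alphabet. -/
inductive Letter : Type
  | a : Letter
  | b : Letter
deriving DecidableEq

/-- A word is a finite sequence of letters. -/
abbrev Word := List Letter

/-- Concatenation set `UV = {uv : u ∈ U, v ∈ V}`. -/
def concatSet (U V : Set Word) : Set Word := {w | ∃ u ∈ U, ∃ v ∈ V, w = u ++ v}

mutual
  /-- The sets `A_n` of inflated words (indexed so that `Aset 1 = {a}`). -/
  def Aset : ℕ → Set Word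
    | 0 => ∅
    | 1 => {[Letter.a]}
    | n + 2 => concatSet (Bset (n + 1)) (concatSet (Aset (n + 1)) (Aset (n + 1)))
  /-- The sets `B_n` of inflated words (indexed so that `Bset 1 = {b}`). -/
  def Bset : ℕ → Set Word
    | 0 => ∅
    | 1 => {[Letter.b]}
    | n + 2 => concatSet (Aset (n + 1)) (Bset (n + 1)) ∪ concatSet (Bset (n + 1)) (Aset (n + 1))
end

/-- The sub-word `w[a,b] = w_a w_{a+1} … w_b` (1-indexed). -/
def wordSlice (w : Word) (i j : ℕ) : Word := (w.drop (i - 1)).take (j - i + 1)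

/-- `W[a,b] = {w[a,b] : w ∈ W}`. -/
def setSlice (W : Set Word) (i j : ℕ) : Set Word := {x | ∃ w ∈ W, x = wordSlice w i j}

/-- `x` is a sub-word (contiguous factor) of `w`. -/
def IsFactor (x w : Word) : Prop := ∃ u v : Word, w = u ++ x ++ v

/-- `F(S, m)`: the set of all sub-words of length `m` of words in `S`. -/
def FactorSet (S : Set Word) (m : ℕ) : Set Word :=
  {x | x.length = m ∧ ∃ w ∈ S, IsFactor x w}

/-- `F(A, m) = ⋃_{n ≥ 1} F(A_n, m)`. -/
def FA (m : ℕ) : Set Word := ⋃ n ∈ {n : ℕ | 1 ≤ n}, FactorSet (Aset n) m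

/-- `F(B, m) = ⋃_{n ≥ 1} F(B_n, m)`. -/
def FB (m : ℕ) : Set Word := ⋃ n ∈ {n : ℕ | 1 ≤ n}, FactorSet (Bset n) m

/-- The golden mean `τ = (1 + √5)/2`. -/
noncomputable def tau : ℝ := (1 + Real.sqrt 5) / 2

namespace CardAB
open Letter

def IsBlock (l : Word) : Prop := l = [b, a, a] ∨ l = [a, b] ∨ l = [b, a]

def letterBlock : Letter → Word → Prop
  | .a, l => l = [b, a, a]
  | .b, l => l = [a, b] ∨ l = [b, a]

lemma letterBlock_isBlock {c : Letter} {l : Word} (h : letterBlock c l) : IsBlock l := by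
  cases c <;> unfold letterBlock at h <;> unfold IsBlock <;> tauto

lemma letterBlock_inj {c c' : Letter} {l : Word} (h : letterBlock c l) (h' : letterBlock c' l) :
    c = c' := by
  cases c <;> cases c' <;> unfold letterBlock at h h' <;> rcases h with rfl | rfl <;> simp_all

/-- Sardinas–Patterson style lemma: a dangling suffix in `{a, b, aa}` never resolves. -/
lemma sp : ∀ (N : ℕ) (L M : List Word) (d : Word), L.length + M.length ≤ N →
    (∀ l ∈ L, IsBlock l) → (∀ l ∈ M, IsBlock l) →
    (d = [a] ∨ d = [b] ∨ d = [a, a]) → d ++ L.flatten ≠ M.flatten := by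
  intro N
  induction N with
  | zero =>
    intro L M d hN hL hM hd heq
    have hL0 : L = [] := List.eq_nil_of_length_eq_zero (by omega)
    have hM0 : M = [] := List.eq_nil_of_length_eq_zero (by omega)
    subst hL0; subst hM0
    rcases hd with rfl | rfl | rfl <;> simp at heq
  | succ N ih =>
    intro L M d hN hL hM hd heq
    rcases M with _ | ⟨m, M⟩
    · rcases hd with rfl | rfl | rfl <;> simp_all
    · have hm : IsBlock m := hM m (by simp)
      have hM' : ∀ l ∈ M, IsBlock l := fun l hl => hM l (by simp [hl])
      rcases hd with rfl | rfl | rfl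
      · -- d = [a]
        rcases hm with rfl | rfl | rfl
        · simp at heq
        · -- m = [a,b] : L.flatten = b :: M.flatten
          simp only [List.flatten_cons, List.cons_append, List.nil_append,
            List.cons.injEq, true_and] at heq
          rcases L with _ | ⟨l', L⟩
          · simp at heq
          · have hl' : IsBlock l' := hL l' (by simp)
            have hL' : ∀ x ∈ L, IsBlock x := fun x hx => hL x (by simp [hx])
            rcases hl' with rfl | rfl | rfl
            · -- l' = [b,a,a] : M.flatten = a :: a :: L.flatten
              simp only [List.flatten_cons, List.cons_append, List.cons.injEq, true_and] at heq
              exact ih L M [a, a] (by simp at hN ⊢; omega) hL' hM' (by simp) (by simpa using heq)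
            · simp at heq
            · -- l' = [b,a] : M.flatten = a :: L.flatten
              simp only [List.flatten_cons, List.cons_append, List.cons.injEq, true_and] at heq
              exact ih L M [a] (by simp at hN ⊢; omega) hL' hM' (by simp) (by simpa using heq)
        · simp at heq
      · -- d = [b]
        rcases hm with rfl | rfl | rfl
        · -- m = [b,a,a] : L.flatten = a :: a :: M.flatten
          simp only [List.flatten_cons, List.cons_append, List.nil_append,
            List.cons.injEq, true_and] at heq
          exact ih M L [a, a] (by simp at hN ⊢; omega) hM' hL (by simp) (by simpa using heq.symm)
        · simp at heq
        · -- m = [b,a] : L.flatten = a :: M.flatten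
          simp only [List.flatten_cons, List.cons_append, List.nil_append,
            List.cons.injEq, true_and] at heq
          exact ih M L [a] (by simp at hN ⊢; omega) hM' hL (by simp) (by simpa using heq.symm)
      · -- d = [a,a]
        rcases hm with rfl | rfl | rfl <;> simp at heq

/-- Unique decipherability of the code `{baa, ab, ba}`. -/
lemma ud : ∀ (L M : List Word), (∀ l ∈ L, IsBlock l) → (∀ l ∈ M, IsBlock l) →
    L.flatten = M.flatten → L = M := by
  intro L
  induction L with
  | nil =>
    intro M _ hM heq
    rcases M with _ | ⟨m, M⟩
    · rfl
    · have hm := hM m (by simp)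
      rcases hm with rfl | rfl | rfl <;> simp at heq
  | cons l L ih =>
    intro M hL hM heq
    have hl : IsBlock l := hL l (by simp)
    have hL' : ∀ x ∈ L, IsBlock x := fun x hx => hL x (by simp [hx])
    rcases M with _ | ⟨m, M⟩
    · rcases hl with rfl | rfl | rfl <;> simp at heq
    · have hm : IsBlock m := hM m (by simp)
      have hM' : ∀ x ∈ M, IsBlock x := fun x hx => hM x (by simp [hx])
      rcases hl with rfl | rfl | rfl <;> rcases hm with rfl | rfl | rfl
      · simp only [List.flatten_cons, List.cons_append, List.cons.injEq, true_and] at heq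
        rw [ih M hL' hM' heq]
      · simp at heq
      · -- [b,a,a] vs [b,a] : a :: L.flatten = M.flatten
        simp only [List.flatten_cons, List.cons_append, List.cons.injEq, true_and] at heq
        exact absurd (show [a] ++ L.flatten = M.flatten by simpa using heq)
          (sp (L.length + M.length) L M [a] le_rfl hL' hM' (by simp))
      · simp at heq
      · simp only [List.flatten_cons, List.cons_append, List.cons.injEq, true_and] at heq
        rw [ih M hL' hM' heq]
      · simp at heq
      · -- [b,a] vs [b,a,a] : M.flatten ++ ... : L.flatten = a :: M.flatten
        simp only [List.flatten_cons, List.cons_append, List.cons.injEq, true_and] at heq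
        exact absurd (show [a] ++ M.flatten = L.flatten by simpa using heq.symm)
          (sp (M.length + L.length) M L [a] le_rfl hM' hL' (by simp))
      · simp at heq
      · simp only [List.flatten_cons, List.cons_append, List.cons.injEq, true_and] at heq
        rw [ih M hL' hM' heq]

/-- `Subst u w` : `w` is obtained from `u` by the substitution `a ↦ baa`, `b ↦ ab | ba`. -/
def Subst (u w : Word) : Prop :=
  ∃ L : List Word, List.Forall₂ letterBlock u L ∧ w = L.flatten

lemma Subst.append {u v w x : Word} (h : Subst u w) (h' : Subst v x) : Subst (u ++ v) (w ++ x) := by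
  obtain ⟨L, hL, rfl⟩ := h
  obtain ⟨M, hM, rfl⟩ := h'
  exact ⟨L ++ M, List.rel_append hL hM, by simp⟩

lemma forall₂_blocks {u : Word} {L : List Word} (h : List.Forall₂ letterBlock u L) :
    ∀ l ∈ L, IsBlock l := by
  induction h with
  | nil => simp
  | @cons c l' u' L' hcl _ ih =>
    intro x hx
    rcases List.mem_cons.mp hx with rfl | hx
    · exact letterBlock_isBlock hcl
    · exact ih x hx

lemma forall₂_inj : ∀ {L : List Word} {u u' : Word},
    List.Forall₂ letterBlock u L → List.Forall₂ letterBlock u' L → u = u' := by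
  intro L
  induction L with
  | nil =>
    intro u u' h h'
    cases h; cases h'; rfl
  | cons l L ih =>
    intro u u' h h'
    rcases h with _ | ⟨hc, hrest⟩
    rcases h' with _ | ⟨hc', hrest'⟩
    rw [letterBlock_inj hc hc', ih hrest hrest']

lemma subst_unique {u u' w : Word} (h : Subst u w) (h' : Subst u' w) : u = u' := by
  obtain ⟨L, hL, rfl⟩ := h
  obtain ⟨M, hM, hMe⟩ := h'
  have : L = M := ud L M (forall₂_blocks hL) (forall₂_blocks hM) hMe
  subst this
  exact forall₂_inj hL hM

lemma subst_step : ∀ n, 1 ≤ n →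
    (∀ w ∈ Aset (n + 1), ∃ u ∈ Aset n, Subst u w) ∧
    (∀ w ∈ Bset (n + 1), ∃ u ∈ Bset n, Subst u w) := by
  intro n hn
  induction n, hn using Nat.le_induction with
  | base =>
    constructor
    · rintro w hw
      rw [show (1 : ℕ) + 1 = 0 + 2 from rfl, Aset] at hw
      obtain ⟨x, hx, y, hy, rfl⟩ := hw
      obtain ⟨y₁, hy₁, y₂, hy₂, rfl⟩ := hy
      rw [Bset] at hx; rw [Aset] at hy₁ hy₂
      simp only [Set.mem_singleton_iff] at hx hy₁ hy₂
      subst hx; subst hy₁; subst hy₂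
      refine ⟨[a], by simp [Aset], ⟨[[b, a, a]], ?_, rfl⟩⟩
      exact List.Forall₂.cons (by exact rfl) List.Forall₂.nil
    · rintro w hw
      rw [show (1 : ℕ) + 1 = 0 + 2 from rfl, Bset] at hw
      rcases hw with hw | hw
      · obtain ⟨x, hx, y, hy, rfl⟩ := hw
        rw [Aset] at hx; rw [Bset] at hy
        simp only [Set.mem_singleton_iff] at hx hy
        subst hx; subst hy
        refine ⟨[b], by simp [Bset], ⟨[[a, b]], ?_, rfl⟩⟩
        exact List.Forall₂.cons (by exact Or.inl rfl) List.Forall₂.nil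
      · obtain ⟨x, hx, y, hy, rfl⟩ := hw
        rw [Bset] at hx; rw [Aset] at hy
        simp only [Set.mem_singleton_iff] at hx hy
        subst hx; subst hy
        refine ⟨[b], by simp [Bset], ⟨[[b, a]], ?_, rfl⟩⟩
        exact List.Forall₂.cons (by exact Or.inr rfl) List.Forall₂.nil
  | succ n hn ih =>
    obtain ⟨ihA, ihB⟩ := ih
    constructor
    · rintro w hw
      rw [show n + 1 + 1 = n + 2 from rfl, Aset] at hw
      obtain ⟨x, hx, yz, hyz, rfl⟩ := hw
      obtain ⟨y, hy, z, hz, rfl⟩ := hyz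
      obtain ⟨ux, hux, hsx⟩ := ihB x hx
      obtain ⟨uy, huy, hsy⟩ := ihA y hy
      obtain ⟨uz, huz, hsz⟩ := ihA z hz
      refine ⟨ux ++ (uy ++ uz), ?_, hsx.append (hsy.append hsz)⟩
      obtain ⟨m, rfl⟩ : ∃ m, n = m + 1 := ⟨n - 1, by omega⟩
      rw [show m + 1 + 1 = m + 2 from rfl, Aset]
      exact ⟨ux, hux, uy ++ uz, ⟨uy, huy, uz, huz, rfl⟩, rfl⟩
    · rintro w hw
      rw [show n + 1 + 1 = n + 2 from rfl, Bset] at hw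
      obtain ⟨m, rfl⟩ : ∃ m, n = m + 1 := ⟨n - 1, by omega⟩
      rcases hw with hw | hw
      · obtain ⟨x, hx, y, hy, rfl⟩ := hw
        obtain ⟨ux, hux, hsx⟩ := ihA x hx
        obtain ⟨uy, huy, hsy⟩ := ihB y hy
        refine ⟨ux ++ uy, ?_, hsx.append hsy⟩
        rw [show m + 1 + 1 = m + 2 from rfl, Bset]
        exact Or.inl ⟨ux, hux, uy, huy, rfl⟩
      · obtain ⟨x, hx, y, hy, rfl⟩ := hw
        obtain ⟨ux, hux, hsx⟩ := ihB x hx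
        obtain ⟨uy, huy, hsy⟩ := ihA y hy
        refine ⟨ux ++ uy, ?_, hsx.append hsy⟩
        rw [show m + 1 + 1 = m + 2 from rfl, Bset]
        exact Or.inr ⟨ux, hux, uy, huy, rfl⟩

lemma disj : ∀ n, 1 ≤ n → ∀ w, w ∈ concatSet (Aset n) (Bset n) →
    w ∈ concatSet (Bset n) (Aset n) → False := by
  intro n hn
  induction n, hn using Nat.le_induction with
  | base =>
    rintro w ⟨x, hx, y, hy, rfl⟩ ⟨x', hx', y', hy', he⟩
    rw [Aset] at hx hy'; rw [Bset] at hy hx'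
    simp only [Set.mem_singleton_iff] at hx hy hx' hy'
    subst hx; subst hy; subst hx'; subst hy'
    simp at he
  | succ n hn ih =>
    rintro w ⟨x, hx, y, hy, rfl⟩ ⟨x', hx', y', hy', he⟩
    obtain ⟨ux, hux, hsx⟩ := (subst_step n hn).1 x hx
    obtain ⟨uy, huy, hsy⟩ := (subst_step n hn).2 y hy
    obtain ⟨ux', hux', hsx'⟩ := (subst_step n hn).2 x' hx'
    obtain ⟨uy', huy', hsy'⟩ := (subst_step n hn).1 y' hy'
    have h1 : Subst (ux ++ uy) (x ++ y) := hsx.append hsy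
    have h2 : Subst (ux' ++ uy') (x ++ y) := by rw [he]; exact hsx'.append hsy'
    have := subst_unique h1 h2
    exact ih (ux ++ uy) ⟨ux, hux, uy, huy, rfl⟩ ⟨ux', hux', uy', huy', this⟩

lemma concat_eq_image : ∀ U V : Set Word,
    concatSet U V = (fun p : Word × Word => p.1 ++ p.2) '' (U ×ˢ V) := by
  intro U V
  ext w
  constructor
  · rintro ⟨u, hu, v, hv, rfl⟩
    exact ⟨(u, v), ⟨hu, hv⟩, rfl⟩
  · rintro ⟨⟨u, v⟩, ⟨hu, hv⟩, rfl⟩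
    exact ⟨u, hu, v, hv, rfl⟩

lemma concat_finite {U V : Set Word} (hU : U.Finite) (hV : V.Finite) :
    (concatSet U V).Finite := by
  rw [concat_eq_image]
  exact (hU.prod hV).image _

lemma setsFinite : ∀ n, (Aset n).Finite ∧ (Bset n).Finite := by
  intro n
  induction n using Nat.strong_induction_on with
  | _ n ih =>
    match n with
    | 0 => rw [Aset, Bset]; exact ⟨Set.finite_empty, Set.finite_empty⟩
    | 1 => rw [Aset, Bset]; exact ⟨Set.finite_singleton _, Set.finite_singleton _⟩
    | n + 2 =>
      obtain ⟨hA, hB⟩ := ih (n + 1) (by omega)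
      rw [Aset, Bset]
      exact ⟨concat_finite hB (concat_finite hA hA),
        (concat_finite hA hB).union (concat_finite hB hA)⟩

lemma lenConst : ∀ n, (∃ k, ∀ w ∈ Aset n, w.length = k) ∧ (∃ k, ∀ w ∈ Bset n, w.length = k) := by
  intro n
  induction n using Nat.strong_induction_on with
  | _ n ih =>
    match n with
    | 0 => rw [Aset, Bset]; exact ⟨⟨0, by simp⟩, ⟨0, by simp⟩⟩
    | 1 => rw [Aset, Bset]; exact ⟨⟨1, by simp⟩, ⟨1, by simp⟩⟩
    | n + 2 =>
      obtain ⟨⟨ka, hka⟩, ⟨kb, hkb⟩⟩ := ih (n + 1) (by omega)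
      rw [Aset, Bset]
      constructor
      · refine ⟨kb + (ka + ka), ?_⟩
        rintro w ⟨u, hu, v, ⟨v₁, hv₁, v₂, hv₂, rfl⟩, rfl⟩
        simp [hka v₁ hv₁, hka v₂ hv₂, hkb u hu]
      · refine ⟨ka + kb, ?_⟩
        rintro w (⟨u, hu, v, hv, rfl⟩ | ⟨u, hu, v, hv, rfl⟩)
        · simp [hka u hu, hkb v hv]
        · simp [hka v hv, hkb u hu]; omega

lemma ncard_concat {U V : Set Word} (hU : U.Finite) (hV : V.Finite)
    (h : ∃ k, ∀ w ∈ U, w.length = k) :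
    (concatSet U V).ncard = U.ncard * V.ncard := by
  obtain ⟨k, hk⟩ := h
  rw [concat_eq_image]
  rw [Set.ncard_image_of_injOn]
  · rw [Set.ncard_eq_toFinset_card _ (hU.prod hV), Set.ncard_eq_toFinset_card _ hU,
      Set.ncard_eq_toFinset_card _ hV, ← Finset.card_product]
    congr 1
    ext p
    simp
  · rintro ⟨u, v⟩ ⟨hu, hv⟩ ⟨u', v'⟩ ⟨hu', hv'⟩ he
    simp only at he
    have hlen : u.length = u'.length := by rw [hk u hu, hk u' hu']
    obtain ⟨h1, h2⟩ := List.append_inj he hlen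
    simp [h1, h2]

end CardAB

theorem card_Aset_Bset (n : ℕ) (hn : 2 ≤ n) :
    (Aset n).ncard = 2 ^ (Nat.fib (2 * n - 3) - 1) ∧
    (Bset n).ncard = 2 ^ (Nat.fib (2 * n - 4) + 1) := by
  induction n, hn using Nat.le_induction with
  | base =>
    constructor
    · have : Aset 2 = {[Letter.b, Letter.a, Letter.a]} := by
        rw [show (2 : ℕ) = 0 + 2 from rfl, Aset]
        ext w
        constructor
        · rintro ⟨u, hu, v, ⟨v₁, hv₁, v₂, hv₂, rfl⟩, rfl⟩
          rw [Aset] at hv₁ hv₂; rw [Bset] at hu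
          simp only [Set.mem_singleton_iff] at *
          subst hu; subst hv₁; subst hv₂; rfl
        · rintro rfl
          exact ⟨[Letter.b], by simp [Bset],
            [Letter.a, Letter.a], ⟨[Letter.a], by simp [Aset], [Letter.a], by simp [Aset], rfl⟩, rfl⟩
      rw [this]
      simp
    · have : Bset 2 = {[Letter.a, Letter.b], [Letter.b, Letter.a]} := by
        rw [show (2 : ℕ) = 0 + 2 from rfl, Bset]
        ext w
        constructor
        · rintro (⟨u, hu, v, hv, rfl⟩ | ⟨u, hu, v, hv, rfl⟩)
          · rw [Aset] at hu; rw [Bset] at hv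
            simp only [Set.mem_singleton_iff] at hu hv
            subst hu; subst hv; simp
          · rw [Bset] at hu; rw [Aset] at hv
            simp only [Set.mem_singleton_iff] at hu hv
            subst hu; subst hv; simp
        · rintro (rfl | rfl)
          · exact Or.inl ⟨[Letter.a], by simp [Aset], [Letter.b], by simp [Bset], rfl⟩
          · exact Or.inr ⟨[Letter.b], by simp [Bset], [Letter.a], by simp [Aset], rfl⟩
      rw [this, Set.ncard_pair (by simp)]
      norm_num [Nat.fib_zero]
  | succ n hn ih =>
    obtain ⟨ihA, ihB⟩ := ih
    obtain ⟨hAfin, hBfin⟩ := CardAB.setsFinite n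
    obtain ⟨hAlen, hBlen⟩ := CardAB.lenConst n
    obtain ⟨m, rfl⟩ : ∃ m, n = m + 1 := ⟨n - 1, by omega⟩
    set k := 2 * (m + 1) - 4 with hk
    have hfib1 : Nat.fib (k + 2) = Nat.fib k + Nat.fib (k + 1) := Nat.fib_add_two
    have hfib2 : Nat.fib (k + 3) = Nat.fib (k + 1) + Nat.fib (k + 2) := by
      rw [show k + 3 = (k + 1) + 2 from rfl]; exact Nat.fib_add_two
    have hfpos : 1 ≤ Nat.fib (k + 1) := Nat.fib_pos.mpr (by omega)
    have e1 : 2 * (m + 1) - 3 = k + 1 := by omega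
    have e2 : 2 * (m + 1 + 1) - 3 = k + 3 := by omega
    have e3 : 2 * (m + 1 + 1) - 4 = k + 2 := by omega
    rw [e1] at ihA
    constructor
    · rw [show m + 1 + 1 = m + 2 from rfl, Aset, e2]
      rw [CardAB.ncard_concat hBfin (CardAB.concat_finite hAfin hAfin) hBlen,
        CardAB.ncard_concat hAfin hAfin hAlen, ihA, ihB]
      rw [← pow_add, ← pow_add]
      congr 1
      omega
    · have hdisj : Disjoint (concatSet (Aset (m + 1)) (Bset (m + 1)))
          (concatSet (Bset (m + 1)) (Aset (m + 1))) := by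
        rw [Set.disjoint_left]
        intro w hw hw'
        exact CardAB.disj (m + 1) (by omega) w hw hw'
      rw [show m + 1 + 1 = m + 2 from rfl, Bset, e3]
      rw [Set.ncard_union_eq hdisj (CardAB.concat_finite hAfin hBfin)
        (CardAB.concat_finite hBfin hAfin)]
      rw [CardAB.ncard_concat hAfin hBfin hAlen, CardAB.ncard_concat hBfin hAfin hBlen,
        ihA, ihB]
      have hx : Nat.fib (k + 1) - 1 + (Nat.fib k + 1) = Nat.fib (k + 2) := by omega
      rw [← pow_add, hx, mul_comm ((2:ℕ) ^ (Nat.fib k + 1)), ← pow_add, hx, ← two_mul,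
        ← pow_succ']
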